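/- arXiv:1509.03745 — 2 statements merged into one kernel-verified Lean document; each statement's English description precedes it below -/
import Mathlib

section
/- Let Q be as in the context and fix a real number a. Then the function b ↦ ψ(a,b)/(b−a) is strictly increasing on the interval (a, +∞), and it tends to +∞ as b → +∞. -/
/-!
Write `ψ(a,b)/(b−a) = G(b) − 2π/(b−a)`, where `G(b) = ∫₀¹ Q'((1−t)b + t·a) w(t) dt` with the
integrable weight `w(t) = √((1−t)/t) ≥ 0`. Convexity makes `Q'` monotone, so `G` is monotone in `b`,
while `−2π/(b−a)` is strictly increasing on `(a, ∞)`. For the limit, bound `G(b)` from below by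
`Q'((a+b)/2) ∫₀^{1/2} w + Q'(a) ∫_{1/2}^1 w`; since `Q'` has odd degree `2m − 1 ≥ 1` and positive
leading coefficient, `Q'((a+b)/2) → +∞`, and `2π/(b−a) → 0`.
-/

open MeasureTheory intervalIntegral

/-- `φ(a,b) = ∫₀¹ Q'((1−t)b + t·a)/√(t(1−t)) dt`. -/
noncomputable def phi (Q : Polynomial ℝ) (a b : ℝ) : ℝ :=
  ∫ t in (0:ℝ)..1, Q.derivative.eval ((1 - t) * b + t * a) / Real.sqrt (t * (1 - t))

/-- `ψ(a,b) = (b−a)·∫₀¹ Q'((1−t)b + t·a)·√((1−t)/t) dt − 2π`. -/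
noncomputable def psi (Q : Polynomial ℝ) (a b : ℝ) : ℝ :=
  (b - a) * (∫ t in (0:ℝ)..1, Q.derivative.eval ((1 - t) * b + t * a) * Real.sqrt ((1 - t) / t))
    - 2 * Real.pi

open Filter Set

noncomputable def segmentIntegral (f w : ℝ → ℝ) (a b : ℝ) : ℝ :=
  ∫ t in (0:ℝ)..1, f ((1 - t) * b + t * a) * w t

section segmentIntegral

variable {f w : ℝ → ℝ} {c d : ℝ}

lemma intervalIntegrable_comp_segment_mul (hfc : Continuous f)
    (hwi : IntervalIntegrable w volume c d) (a b : ℝ) :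
    IntervalIntegrable (fun t => f ((1 - t) * b + t * a) * w t) volume c d :=
  hwi.continuousOn_mul (by fun_prop)

lemma monotone_segmentIntegral (hf : Monotone f) (hfc : Continuous f)
    (hw : ∀ t ∈ Icc (0:ℝ) 1, 0 ≤ w t) (hwi : IntervalIntegrable w volume 0 1) (a : ℝ) :
    Monotone (segmentIntegral f w a) := by
  intro b₁ b₂ hb
  refine intervalIntegral.integral_mono_on zero_le_one
    (intervalIntegrable_comp_segment_mul hfc hwi a b₁)
    (intervalIntegrable_comp_segment_mul hfc hwi a b₂) fun t ht => ?_
  exact mul_le_mul_of_nonneg_right (hf (by nlinarith [ht.2])) (hw t ht)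

lemma le_segmentIntegral (hf : Monotone f) (hfc : Continuous f)
    (hw : ∀ t ∈ Icc (0:ℝ) 1, 0 ≤ w t) (hwi : IntervalIntegrable w volume 0 1)
    {a b : ℝ} (hab : a ≤ b) :
    f ((a + b) / 2) * (∫ t in (0:ℝ)..1/2, w t) + f a * (∫ t in (1/2:ℝ)..1, w t)
      ≤ segmentIntegral f w a b := by
  have hw₁ : IntervalIntegrable w volume 0 (1/2) :=
    hwi.mono_set (uIcc_subset_uIcc left_mem_uIcc (by norm_num [mem_uIcc]))
  have hw₂ : IntervalIntegrable w volume (1/2) 1 :=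
    hwi.mono_set (uIcc_subset_uIcc (by norm_num [mem_uIcc]) right_mem_uIcc)
  rw [segmentIntegral, ← intervalIntegral.integral_add_adjacent_intervals
    (intervalIntegrable_comp_segment_mul hfc hw₁ a b)
    (intervalIntegrable_comp_segment_mul hfc hw₂ a b),
    ← intervalIntegral.integral_const_mul, ← intervalIntegral.integral_const_mul]
  gcongr ?_ + ?_
  · refine intervalIntegral.integral_mono_on (by norm_num) (hw₁.const_mul _)
      (intervalIntegrable_comp_segment_mul hfc hw₁ a b) fun t ht => ?_
    exact mul_le_mul_of_nonneg_right (hf (by nlinarith [ht.2]))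
      (hw t ⟨ht.1, by linarith [ht.2]⟩)
  · refine intervalIntegral.integral_mono_on (by norm_num) (hw₂.const_mul _)
      (intervalIntegrable_comp_segment_mul hfc hw₂ a b) fun t ht => ?_
    exact mul_le_mul_of_nonneg_right (hf (by nlinarith [ht.2]))
      (hw t ⟨by linarith [ht.1], ht.2⟩)

lemma tendsto_segmentIntegral_atTop (hf : Monotone f) (hfc : Continuous f)
    (hf_top : Tendsto f atTop atTop) (hw : ∀ t ∈ Icc (0:ℝ) 1, 0 ≤ w t)
    (hwi : IntervalIntegrable w volume 0 1) (hw_pos : 0 < ∫ t in (0:ℝ)..1/2, w t) (a : ℝ) :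
    Tendsto (segmentIntegral f w a) atTop atTop := by
  have hmid : Tendsto (fun b : ℝ => (a + b) / 2) atTop atTop :=
    (tendsto_atTop_add_const_left _ a tendsto_id).atTop_div_const two_pos
  refine tendsto_atTop_mono' _ ?_ <|
    tendsto_atTop_add_const_right _ (f a * ∫ t in (1/2:ℝ)..1, w t)
      ((hf_top.comp hmid).atTop_mul_const hw_pos)
  filter_upwards [eventually_ge_atTop a] with b hb
  exact le_segmentIntegral hf hfc hw hwi hb

end segmentIntegral

lemma intervalIntegrable_sqrt_one_sub_div :
    IntervalIntegrable (fun t : ℝ => √((1 - t) / t)) volume 0 1 := by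
  refine (intervalIntegrable_rpow' (r := -(1/2)) (by norm_num)).mono_fun'
    ((measurable_const.sub measurable_id).div measurable_id).sqrt.aestronglyMeasurable ?_
  filter_upwards [self_mem_ae_restrict measurableSet_uIoc] with t ht
  rw [uIoc_of_le zero_le_one] at ht
  rw [Real.norm_of_nonneg (Real.sqrt_nonneg _), Real.rpow_neg ht.1.le, ← Real.sqrt_eq_rpow,
    ← Real.sqrt_inv, inv_eq_one_div]
  exact Real.sqrt_le_sqrt (div_le_div_of_nonneg_right (by linarith [ht.1]) ht.1.le)

lemma integral_sqrt_one_sub_div_pos : 0 < ∫ t in (0:ℝ)..1/2, √((1 - t) / t) :=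
  intervalIntegral.intervalIntegral_pos_of_pos_on
    (intervalIntegrable_sqrt_one_sub_div.mono_set
      (uIcc_subset_uIcc left_mem_uIcc (by norm_num [mem_uIcc])))
    (fun t ht => Real.sqrt_pos.2 (div_pos (by linarith [ht.2]) ht.1)) (by norm_num)

namespace Polynomial

lemma monotone_eval_of_derivative_nonneg {P : ℝ[X]} (h : ∀ x, 0 ≤ P.derivative.eval x) :
    Monotone fun x => P.eval x :=
  monotone_of_deriv_nonneg P.differentiable fun x => by rw [Polynomial.deriv]; exact h x

lemma tendsto_eval_derivative_atTop {Q : ℝ[X]} (hdeg : 2 ≤ Q.natDegree)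
    (hlead : 0 < Q.leadingCoeff) : Tendsto (fun x => Q.derivative.eval x) atTop atTop := by
  refine Q.derivative.tendsto_atTop_of_leadingCoeff_nonneg ?_ ?_
  · rw [← natDegree_pos_iff_degree_pos, natDegree_derivative]
    omega
  · rw [leadingCoeff_derivative]
    positivity

end Polynomial

/-- For fixed `a`, the map `b ↦ ψ(a,b)/(b−a)` is strictly increasing on `(a, ∞)`
and tends to `+∞` as `b → +∞`. -/
theorem strictMonoOn_psi_div (Q : Polynomial ℝ) (m : ℕ) (hm : 1 ≤ m)
    (hdeg : Q.natDegree = 2 * m) (hlead : 0 < Q.leadingCoeff)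
    (hconv : ∀ x : ℝ, 0 ≤ Q.derivative.derivative.eval x) (a : ℝ) :
    StrictMonoOn (fun b => psi Q a b / (b - a)) (Set.Ioi a) ∧
      Filter.Tendsto (fun b => psi Q a b / (b - a)) Filter.atTop Filter.atTop := by
  set G := segmentIntegral (fun x => Q.derivative.eval x) (fun t => √((1 - t) / t)) a
  have hQ'_mono := Polynomial.monotone_eval_of_derivative_nonneg hconv
  have hG_mono : Monotone G :=
    monotone_segmentIntegral hQ'_mono (by fun_prop) (fun _ _ => Real.sqrt_nonneg _)
      intervalIntegrable_sqrt_one_sub_div a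
  have hpsi_div : ∀ b ∈ Ioi a, psi Q a b / (b - a) = G b + -(2 * Real.pi / (b - a)) := by
    intro b hb
    rw [psi, sub_div, mul_div_cancel_left₀ _ (sub_ne_zero.2 (ne_of_gt hb)), sub_eq_add_neg]
    rfl
  constructor
  · refine StrictMonoOn.congr ?_ fun b hb => (hpsi_div b hb).symm
    refine hG_mono.monotoneOn _ |>.add_strictMono fun b₁ hb₁ b₂ _ hb => ?_
    exact neg_lt_neg <| div_lt_div_of_pos_left (by positivity) (sub_pos.2 hb₁) (by linarith)
  · have hG_top : Tendsto G atTop atTop :=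
      tendsto_segmentIntegral_atTop hQ'_mono (by fun_prop)
        (Polynomial.tendsto_eval_derivative_atTop (by omega) hlead)
        (fun _ _ => Real.sqrt_nonneg _) intervalIntegrable_sqrt_one_sub_div
        integral_sqrt_one_sub_div_pos a
    have hcorr : Tendsto (fun b => -(2 * Real.pi / (b - a))) atTop (nhds 0) := by
      simpa [sub_eq_add_neg] using
        ((tendsto_atTop_add_const_right _ (-a) tendsto_id).const_div_atTop (2 * Real.pi)).neg
    refine (hG_top.atTop_add hcorr).congr' ?_
    filter_upwards [eventually_gt_atTop a] with b hb
    exact (hpsi_div b hb).symm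
end

section
/- Let Q be as in the context. Let a₁ < a₂ be real numbers and let b₁ > a₁ and b₂ > a₂ satisfy ψ(a₁,b₁) = 0 and ψ(a₂,b₂) = 0. If moreover φ(a₁,b₁) ≥ 0, then b₁ < b₂. (The map a ↦ b(a) is strictly increasing on the region where φ(a, b(a)) ≥ 0.) -/
open MeasureTheory intervalIntegral

/-! If `b₂ ≤ b₁`, put `a' = a₂ + (b₁ - b₂)`, so that `[a', b₁]` is `[a₂, b₂]` translated to the
right and `a₁ < a₂ ≤ a'`. As `Q'` is increasing, translating to the right can only increase `ψ`,
hence `ψ(a', b₁) ≥ ψ(a₂, b₂) = 0`. On the other hand, differentiating under the integral and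
integrating by parts gives `∂ψ/∂a = -φ/2`, and `φ(·, b₁)` is strictly increasing because `Q'` is
(`Q'' ≥ 0` and `Q'' ≠ 0` since `deg Q ≥ 2`). So `φ(·, b₁) > φ(a₁, b₁) ≥ 0` on `(a₁, ∞)`, where
`ψ(·, b₁)` therefore strictly decreases: `ψ(a', b₁) < ψ(a₁, b₁) = 0`, a contradiction. -/

open Set

lemma hasDerivAt_arcsin_two_mul_sub_one {t : ℝ} (ht : t ∈ Ioo (0 : ℝ) 1) :
    HasDerivAt (fun t => Real.arcsin (2 * t - 1)) (√(t * (1 - t)))⁻¹ t := by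
  have hlin : HasDerivAt (fun t : ℝ => 2 * t - 1) 2 t := by
    simpa using ((hasDerivAt_id t).const_mul 2).sub_const 1
  refine ((Real.hasDerivAt_arcsin (by linarith [ht.1]) (by linarith [ht.2])).comp t
    hlin).congr_deriv ?_
  rw [show 1 - (2 * t - 1) ^ 2 = 2 ^ 2 * (t * (1 - t)) by ring,
    Real.sqrt_mul (by norm_num), Real.sqrt_sq (by norm_num)]
  field_simp

lemma intervalIntegrable_inv_sqrt_mul_one_sub :
    IntervalIntegrable (fun t : ℝ => (√(t * (1 - t)))⁻¹) volume 0 1 := by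
  refine intervalIntegrable_deriv_of_nonneg (g := fun t => Real.arcsin (2 * t - 1))
    (by fun_prop) (fun t ht => ?_) (fun t _ => by positivity)
  simp only [zero_le_one, min_eq_left, max_eq_right] at ht
  exact hasDerivAt_arcsin_two_mul_sub_one ht

lemma Continuous.intervalIntegrable_mul_inv_sqrt_mul_one_sub {g : ℝ → ℝ} (hg : Continuous g) :
    IntervalIntegrable (fun t => g t * (√(t * (1 - t)))⁻¹) volume 0 1 :=
  intervalIntegrable_inv_sqrt_mul_one_sub.continuousOn_mul hg.continuousOn

/- Valid for every `t`: outside `(0, 1]` both sides vanish, because `√` is `0` on negatives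
and `x / 0 = 0`. -/
lemma sqrt_one_sub_div_self (t : ℝ) : √((1 - t) / t) = (1 - t) * (√(t * (1 - t)))⁻¹ := by
  rcases le_or_gt (1 - t) 0 with h | h
  · rcases h.lt_or_eq with h | h
    · have ht : 0 < t := by linarith
      rw [Real.sqrt_eq_zero_of_nonpos (div_nonpos_of_nonpos_of_nonneg h.le ht.le),
        Real.sqrt_eq_zero_of_nonpos (mul_nonpos_of_nonneg_of_nonpos ht.le h.le)]
      simp
    · simp [h]
  · rw [← mul_div_mul_right (1 - t) t h.ne', Real.sqrt_div (by positivity), ← sq,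
      Real.sqrt_sq h.le, div_eq_mul_inv]

lemma mul_sqrt_one_sub_div_self (t : ℝ) : t * √((1 - t) / t) = √(t * (1 - t)) := by
  rw [sqrt_one_sub_div_self, ← mul_assoc, ← div_eq_mul_inv, Real.div_sqrt]

lemma Continuous.intervalIntegrable_mul_sqrt_one_sub_div {g : ℝ → ℝ} (hg : Continuous g) :
    IntervalIntegrable (fun t => g t * √((1 - t) / t)) volume 0 1 := by
  simpa only [sqrt_one_sub_div_self, ← mul_assoc] using
    (by fun_prop : Continuous fun t => g t * (1 - t)).intervalIntegrable_mul_inv_sqrt_mul_one_sub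

lemma hasDerivAt_sqrt_mul_one_sub {t : ℝ} (ht : t ∈ Ioo (0 : ℝ) 1) :
    HasDerivAt (fun t => √(t * (1 - t))) ((1 / 2 - t) * (√(t * (1 - t)))⁻¹) t := by
  have hq : HasDerivAt (fun t : ℝ => t * (1 - t)) (1 - 2 * t) t :=
    ((hasDerivAt_id' t).mul ((hasDerivAt_id' t).const_sub 1)).congr_deriv (by ring)
  refine (hq.sqrt (mul_pos ht.1 (sub_pos.2 ht.2)).ne').congr_deriv ?_
  ring

/- Integration by parts against `√(t (1 - t))`, which vanishes at both ends. -/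
lemma integral_comp_mul_deriv_sqrt_mul_one_sub {f f' : ℝ → ℝ} (hf : ∀ x, HasDerivAt f (f' x) x)
    (hf' : Continuous f') (a b : ℝ) :
    ∫ t in (0 : ℝ)..1, f ((1 - t) * b + t * a) * ((1 / 2 - t) * (√(t * (1 - t)))⁻¹)
      = (b - a) * ∫ t in (0 : ℝ)..1, f' ((1 - t) * b + t * a) * √(t * (1 - t)) := by
  have hf_cont : Continuous f := continuous_iff_continuousAt.2 fun x => (hf x).continuousAt
  have hseg : ∀ t, HasDerivAt (fun t => f ((1 - t) * b + t * a))
      (f' ((1 - t) * b + t * a) * (a - b)) t := fun t =>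
    (hf _).comp t <| ((((hasDerivAt_id' t).const_sub 1).mul_const b).add
      ((hasDerivAt_id' t).mul_const a)).congr_deriv (by ring)
  rw [integral_mul_deriv_eq_deriv_mul_of_hasDerivAt (by fun_prop) (by fun_prop)
    (fun t _ => hseg t) (fun t ht => hasDerivAt_sqrt_mul_one_sub (by simpa using ht))
    ((by fun_prop : Continuous fun t => f' ((1 - t) * b + t * a) * (a - b)).intervalIntegrable 0 1)
    ((by fun_prop : Continuous fun t : ℝ => 1 / 2 - t).intervalIntegrable_mul_inv_sqrt_mul_one_sub)]
  simp [mul_right_comm _ (a - b), intervalIntegral.integral_mul_const]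
  ring

lemma hasDerivAt_integral_comp_mul_sqrt_one_sub_div {f f' : ℝ → ℝ}
    (hf : ∀ x, HasDerivAt f (f' x) x) (hf' : Continuous f') (b x₀ : ℝ) :
    HasDerivAt (fun a => ∫ t in (0 : ℝ)..1, f ((1 - t) * b + t * a) * √((1 - t) / t))
      (∫ t in (0 : ℝ)..1, f' ((1 - t) * b + t * x₀) * √(t * (1 - t))) x₀ := by
  have hf_cont : Continuous f := continuous_iff_continuousAt.2 fun x => (hf x).continuousAt
  obtain ⟨C, hC⟩ := (isCompact_Icc.prod (isCompact_closedBall x₀ 1)).exists_bound_of_continuousOn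
    (f := fun p : ℝ × ℝ => f' ((1 - p.1) * b + p.1 * p.2) * √(p.1 * (1 - p.1))) (by fun_prop)
  have hint : ∀ a, IntervalIntegrable (fun t => f ((1 - t) * b + t * a) * √((1 - t) / t))
      volume 0 1 := fun a => (by fun_prop : Continuous fun t =>
    f ((1 - t) * b + t * a)).intervalIntegrable_mul_sqrt_one_sub_div
  refine (hasDerivAt_integral_of_dominated_loc_of_deriv_le (bound := fun _ => C)
    (F' := fun x t => f' ((1 - t) * b + t * x) * √(t * (1 - t)))
    (Metric.ball_mem_nhds x₀ one_pos) (Filter.Eventually.of_forall fun a => (hint a).def'.1)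
    (hint x₀) (by fun_prop) ?_ intervalIntegrable_const ?_).2
  · refine Filter.Eventually.of_forall fun t ht x hx =>
      hC (t, x) ⟨?_, Metric.ball_subset_closedBall hx⟩
    simp only [zero_le_one, uIoc_of_le] at ht
    exact Ioc_subset_Icc_self ht
  · refine Filter.Eventually.of_forall fun t _ x _ => ?_
    have := ((hf _).comp x (((hasDerivAt_id' x).const_mul t).const_add ((1 - t) * b))).mul_const
      √((1 - t) / t)
    rwa [mul_one, mul_assoc, mul_sqrt_one_sub_div_self] at this

lemma hasDerivAt_sub_mul_integral_comp_mul_sqrt_one_sub_div {f f' : ℝ → ℝ}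
    (hf : ∀ x, HasDerivAt f (f' x) x) (hf' : Continuous f') (b x₀ : ℝ) :
    HasDerivAt (fun a => (b - a) * ∫ t in (0 : ℝ)..1, f ((1 - t) * b + t * a) * √((1 - t) / t))
      (-(∫ t in (0 : ℝ)..1, f ((1 - t) * b + t * x₀) / √(t * (1 - t))) / 2) x₀ := by
  have hf_cont : Continuous f := continuous_iff_continuousAt.2 fun x => (hf x).continuousAt
  refine (((hasDerivAt_id' x₀).const_sub b).mul
    (hasDerivAt_integral_comp_mul_sqrt_one_sub_div hf hf' b x₀)).congr_deriv ?_
  have hint₁ : IntervalIntegrable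
      (fun t => f ((1 - t) * b + t * x₀) * ((1 / 2 - t) * (√(t * (1 - t)))⁻¹)) volume 0 1 := by
    simpa only [← mul_assoc] using (by fun_prop : Continuous fun t =>
      f ((1 - t) * b + t * x₀) * (1 / 2 - t)).intervalIntegrable_mul_inv_sqrt_mul_one_sub
  have hint₂ := (by fun_prop : Continuous fun t =>
    f ((1 - t) * b + t * x₀)).intervalIntegrable_mul_sqrt_one_sub_div
  rw [← integral_comp_mul_deriv_sqrt_mul_one_sub hf hf', neg_one_mul, neg_add_eq_sub,
    ← intervalIntegral.integral_sub hint₁ hint₂, ← intervalIntegral.integral_neg,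
    ← intervalIntegral.integral_div]
  refine integral_congr fun t _ => ?_
  simp only [sqrt_one_sub_div_self]
  ring

lemma integral_comp_div_sqrt_mul_one_sub_lt {f : ℝ → ℝ} (hf : Continuous f) (hmono : StrictMono f)
    (b : ℝ) {a a' : ℝ} (h : a < a') :
    ∫ t in (0 : ℝ)..1, f ((1 - t) * b + t * a) / √(t * (1 - t))
      < ∫ t in (0 : ℝ)..1, f ((1 - t) * b + t * a') / √(t * (1 - t)) := by
  have hint : ∀ a, IntervalIntegrable (fun t => f ((1 - t) * b + t * a) / √(t * (1 - t)))
      volume 0 1 := fun a => by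
    simpa only [div_eq_mul_inv] using (by fun_prop : Continuous fun t =>
      f ((1 - t) * b + t * a)).intervalIntegrable_mul_inv_sqrt_mul_one_sub
  rw [← sub_pos, ← intervalIntegral.integral_sub (hint a') (hint a)]
  refine intervalIntegral_pos_of_pos_on ((hint a').sub (hint a)) (fun t ht => ?_) one_pos
  rw [← sub_div]
  have hpos : 0 < t * (1 - t) := mul_pos ht.1 (sub_pos.2 ht.2)
  exact div_pos (sub_pos.2 (hmono (by nlinarith [ht.1]))) (Real.sqrt_pos.2 hpos)

lemma Polynomial.strictMono_eval_of_derivative_nonneg {p : Polynomial ℝ} (hp : p.derivative ≠ 0)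
    (h : ∀ x, 0 ≤ p.derivative.eval x) : StrictMono fun x => p.eval x := by
  have hmono : Monotone fun x => p.eval x :=
    monotone_of_deriv_nonneg p.differentiable fun x => by simpa only [Polynomial.deriv] using h x
  refine hmono.strictMono_of_injective fun x y hxy => ?_
  by_contra hne
  wlog hlt : x < y generalizing x y
  · exact this y x hxy.symm (Ne.symm hne) (lt_of_le_of_ne (not_lt.1 hlt) (Ne.symm hne))
  -- `p` is constant on `[x, y]`, hence everywhere
  have hconst : p = Polynomial.C (p.eval x) := Polynomial.eq_of_infinite_eval_eq _ _ <|
    (Set.Icc_infinite hlt).mono fun z hz => by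
      simpa using le_antisymm (hxy ▸ hmono hz.2) (hmono hz.1)
  exact hp (by rw [hconst, Polynomial.derivative_C])

lemma hasDerivAt_psi_left (Q : Polynomial ℝ) (b x : ℝ) :
    HasDerivAt (fun a => psi Q a b) (-phi Q x b / 2) x :=
  (hasDerivAt_sub_mul_integral_comp_mul_sqrt_one_sub_div (fun y => Q.derivative.hasDerivAt y)
    Q.derivative.derivative.continuous b x).sub_const _

lemma phi_strictMono_left {Q : Polynomial ℝ} (hQ : StrictMono fun x => Q.derivative.eval x)
    (b : ℝ) : StrictMono fun a => phi Q a b := fun _ _ h =>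
  integral_comp_div_sqrt_mul_one_sub_lt Q.derivative.continuous hQ b h

lemma psi_strictAntiOn_left {Q : Polynomial ℝ} (hQ : StrictMono fun x => Q.derivative.eval x)
    {a₀ b : ℝ} (hφ : 0 ≤ phi Q a₀ b) : StrictAntiOn (fun a => psi Q a b) (Ici a₀) := by
  refine strictAntiOn_of_deriv_neg (convex_Ici a₀)
    (fun x _ => (hasDerivAt_psi_left Q b x).continuousAt.continuousWithinAt) fun x hx => ?_
  rw [interior_Ici] at hx
  rw [(hasDerivAt_psi_left Q b x).deriv]
  linarith [phi_strictMono_left hQ b hx]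

lemma psi_le_psi_of_sub_eq {Q : Polynomial ℝ} (hQ : Monotone fun x => Q.derivative.eval x)
    {a b a' b' : ℝ} (hab : a ≤ b) (hb : b ≤ b') (h : b' - a' = b - a) :
    psi Q a b ≤ psi Q a' b' := by
  unfold psi
  rw [h]
  refine sub_le_sub_right (mul_le_mul_of_nonneg_left ?_ (sub_nonneg.2 hab)) _
  refine integral_mono_on zero_le_one
    (Q.derivative.continuous.comp (by fun_prop)).intervalIntegrable_mul_sqrt_one_sub_div
    (Q.derivative.continuous.comp (by fun_prop)).intervalIntegrable_mul_sqrt_one_sub_div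
    fun t _ => mul_le_mul_of_nonneg_right (hQ ?_) (Real.sqrt_nonneg _)
  linear_combination hb + t * h

theorem b_strictMono_general (Q : Polynomial ℝ) (m : ℕ) (hm : 1 ≤ m)
    (hdeg : Q.natDegree = 2 * m)
    (hconv : ∀ x : ℝ, 0 ≤ Q.derivative.derivative.eval x)
    (a₁ a₂ b₁ b₂ : ℝ) (ha : a₁ < a₂) (hb₂ : a₂ < b₂)
    (hψ₁ : psi Q a₁ b₁ = 0) (hψ₂ : psi Q a₂ b₂ = 0) (hφ₁ : 0 ≤ phi Q a₁ b₁) :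
    b₁ < b₂ := by
  have hQ'' : Q.derivative.derivative ≠ 0 := by
    rw [Polynomial.derivative_ne_zero, Polynomial.natDegree_derivative, hdeg]
    omega
  have hQ' := Polynomial.strictMono_eval_of_derivative_nonneg hQ'' hconv
  by_contra! hb
  have hshift : psi Q a₂ b₂ ≤ psi Q (a₂ + (b₁ - b₂)) b₁ :=
    psi_le_psi_of_sub_eq hQ'.monotone hb₂.le hb (by ring)
  have hanti : psi Q (a₂ + (b₁ - b₂)) b₁ < psi Q a₁ b₁ :=
    psi_strictAntiOn_left hQ' hφ₁ self_mem_Ici (by simp only [mem_Ici]; linarith) (by linarith)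
  linarith

/-- The map `a ↦ b(a)` is strictly increasing on the region where `φ(a, b(a)) ≥ 0`. -/
theorem b_strictMono (Q : Polynomial ℝ) (m : ℕ) (hm : 1 ≤ m)
    (hdeg : Q.natDegree = 2 * m) (hlead : 0 < Q.leadingCoeff)
    (hconv : ∀ x : ℝ, 0 ≤ Q.derivative.derivative.eval x)
    (a₁ a₂ b₁ b₂ : ℝ) (ha : a₁ < a₂) (hb₁ : a₁ < b₁) (hb₂ : a₂ < b₂)
    (hψ₁ : psi Q a₁ b₁ = 0) (hψ₂ : psi Q a₂ b₂ = 0) (hφ₁ : 0 ≤ phi Q a₁ b₁) :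
    b₁ < b₂ :=
  b_strictMono_general Q m hm hdeg hconv a₁ a₂ b₁ b₂ ha hb₂ hψ₁ hψ₂ hφ₁
end
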